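/- arXiv:0710.4606 — 3 statements merged into one kernel-verified Lean document; each statement's English description precedes it below -/
import Mathlib

section
/- As a formal power series in two variables, 1/√(1 - 2x - 2y - 2xy + x² + y²) = Σ_{m,n ≥ 0} binom(m+n, m)² xᵐ yⁿ. -/
/-!
Let `W = ∑ binom(m+n,m)² xᵐ yⁿ`. Comparing coefficients, and using only the ratios of
neighbouring binomial coefficients, one checks the first-order equation
`Δ ∂ₓW = (1 + y - x) W` and its mirror image in `y`. Since `∂ₓΔ = -2 (1 + y - x)`, both partial
derivatives of `W² Δ` vanish, so `W² Δ = 1`. Then `(W s)² = 1`, hence `W s = 1` by looking at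
the constant term, and `Z = W`.
-/

open MvPowerSeries Finsupp

noncomputable def binomSq (m n : ℕ) : ℚ := ((m + n).choose m : ℚ) ^ 2

lemma binomSq_comm (m n : ℕ) : binomSq m n = binomSq n m := by
  rw [binomSq, binomSq, add_comm, Nat.choose_symm_add]

@[simp] lemma binomSq_zero_left (n : ℕ) : binomSq 0 n = 1 := by simp [binomSq]

lemma binomSq_succ_left (m n : ℕ) :
    binomSq (m + 1) n = (((m + n + 1 : ℕ) : ℚ) / (m + 1)) ^ 2 * binomSq m n := by
  have h := Nat.add_one_mul_choose_eq (m + n) m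
  rw [show m + n + 1 = m + 1 + n by omega] at h
  rw [binomSq, binomSq, ← mul_pow, show m + n + 1 = m + 1 + n by omega]
  congr 1
  field_simp
  exact_mod_cast h.symm

lemma binomSq_succ_right (m n : ℕ) :
    binomSq m (n + 1) = (((m + n + 1 : ℕ) : ℚ) / (n + 1)) ^ 2 * binomSq m n := by
  rw [binomSq_comm, binomSq_succ_left, binomSq_comm, add_comm n m]

namespace MvPowerSeries

section coeff₂

variable {σ R : Type*} [CommSemiring R] {i j : σ} {m n : ℕ} {f : MvPowerSeries σ R}

noncomputable def coeff₂ (i j : σ) (m n : ℕ) : MvPowerSeries σ R →ₗ[R] R :=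
  coeff (single i m + single j n)

lemma coeff₂_swap : coeff₂ i j m n f = coeff₂ j i n m f := by
  rw [coeff₂, coeff₂, add_comm]

@[simp] lemma coeff₂_X_mul_succ_left : coeff₂ i j (m + 1) n (X i * f) = coeff₂ i j m n f := by
  rw [coeff₂, coeff₂, single_add, add_comm (single i m), add_assoc, X_def,
    coeff_add_monomial_mul, one_mul]

lemma coeff₂_X_mul_zero_left (hij : i ≠ j) : coeff₂ i j 0 n (X i * f) = 0 := by
  classical
  rw [coeff₂, X_def, coeff_monomial_mul, if_neg]
  simp [single_le_iff, hij.symm]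

@[simp] lemma coeff₂_X_mul_succ_right : coeff₂ i j m (n + 1) (X j * f) = coeff₂ i j m n f := by
  rw [coeff₂_swap, coeff₂_X_mul_succ_left, coeff₂_swap]

lemma coeff₂_X_mul_zero_right (hij : i ≠ j) : coeff₂ i j m 0 (X j * f) = 0 := by
  rw [coeff₂_swap, coeff₂_X_mul_zero_left hij.symm]

lemma coeff₂_pderiv_left (hij : i ≠ j) :
    coeff₂ i j m n (pderiv R i f) = coeff₂ i j (m + 1) n f * (m + 1) := by
  classical
  rw [coeff₂, coeff₂, coeff_pderiv, add_right_comm, ← single_add]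
  simp [hij.symm]

end coeff₂

section disc

variable {σ R : Type*} [CommRing R] {i j : σ}

noncomputable def disc (i j : σ) : MvPowerSeries σ R :=
  1 - 2 * X i - 2 * X j - 2 * X i * X j + X i ^ 2 + X j ^ 2

lemma disc_comm : (disc i j : MvPowerSeries σ R) = disc j i := by
  rw [disc, disc]; ring

@[simp] lemma constantCoeff_disc : constantCoeff (disc i j : MvPowerSeries σ R) = 1 := by
  simp [disc]

lemma pderiv_disc (hij : i ≠ j) :
    pderiv R i (disc i j : MvPowerSeries σ R) = 2 * (X i - X j - 1) := by
  have h2 : pderiv R i (2 : MvPowerSeries σ R) = 0 := by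
    exact_mod_cast (pderiv R i).map_natCast 2
  simp [disc, Derivation.leibniz, Derivation.leibniz_pow, pderiv_X_of_ne hij.symm, h2]
  ring

end disc

lemma ext_coeff₂ {R : Type*} [CommSemiring R] {i j : Fin 2} (hij : i ≠ j)
    {f g : MvPowerSeries (Fin 2) R} (h : ∀ m n, coeff₂ i j m n f = coeff₂ i j m n g) :
    f = g := by
  ext e
  have he : e = single i (e i) + single j (e j) := by
    ext k
    obtain rfl | rfl : k = i ∨ k = j := by omega
    · simp [hij.symm]
    · simp [hij]
  rw [he]
  exact h _ _

lemma eq_one_of_sq_eq_one {σ R : Type*} [CommRing R] [NoZeroDivisors R]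
    [NeZero (2 : R)] {f : MvPowerSeries σ R} (hf : f ^ 2 = 1) (hc : constantCoeff f = 1) :
    f = 1 := by
  refine (mul_self_eq_one_iff.1 ((sq f).symm.trans hf)).resolve_right fun h => ?_
  have h2 : (2 : R) = 0 := by
    rw [h, map_neg, map_one] at hc
    linear_combination -hc
  exact two_ne_zero h2

end MvPowerSeries

noncomputable def binomSqSeries : MvPowerSeries (Fin 2) ℚ := fun e => binomSq (e 0) (e 1)

lemma coeff_binomSqSeries (e : Fin 2 →₀ ℕ) : coeff e binomSqSeries = binomSq (e 0) (e 1) := rfl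

lemma coeff₂_binomSqSeries {i j : Fin 2} (hij : i ≠ j) (m n : ℕ) :
    coeff₂ i j m n binomSqSeries = binomSq m n := by
  obtain ⟨rfl, rfl⟩ | ⟨rfl, rfl⟩ : i = 0 ∧ j = 1 ∨ i = 1 ∧ j = 0 := by omega
  · simp [coeff₂, coeff_binomSqSeries]
  · simp [coeff₂, coeff_binomSqSeries, binomSq_comm m]

lemma disc_mul_pderiv_binomSqSeries {i j : Fin 2} (hij : i ≠ j) :
    disc i j * pderiv ℚ i binomSqSeries = (1 + X j - X i) * binomSqSeries := by
  set D := pderiv ℚ i binomSqSeries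
  have hL : disc i j * D = D - 2 • (X i * D) - 2 • (X j * D) - 2 • (X i * (X j * D))
      + X i * (X i * D) + X j * (X j * D) := by
    rw [disc]; ring
  have hR : (1 + X j - X i) * binomSqSeries
      = binomSqSeries + X j * binomSqSeries - X i * binomSqSeries := by
    ring
  refine ext_coeff₂ hij fun m n => ?_
  rw [hL, hR]
  rcases m with _ | _ | m <;> rcases n with _ | _ | n <;>
    simp only [D, map_add, map_sub, map_nsmul, coeff₂_X_mul_succ_left, coeff₂_X_mul_succ_right,
      coeff₂_X_mul_zero_left hij, coeff₂_X_mul_zero_right hij, coeff₂_pderiv_left hij,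
      coeff₂_binomSqSeries hij]
  -- the ratio lemmas turn every coefficient into a rational multiple of `binomSq m n`
  all_goals
    simp only [binomSq_succ_left, binomSq_succ_right, binomSq_zero_left, nsmul_eq_mul]
    push_cast
    field_simp
    ring

lemma constantCoeff_binomSqSeries : constantCoeff binomSqSeries = 1 := by
  rw [← coeff_zero_eq_constantCoeff_apply, coeff_binomSqSeries]
  simp

lemma pderiv_binomSqSeries_sq_mul_disc {i j : Fin 2} (hij : i ≠ j) :
    pderiv ℚ i (binomSqSeries ^ 2 * disc i j) = 0 := by
  rw [Derivation.leibniz, Derivation.leibniz_pow, pderiv_disc hij, smul_eq_mul, smul_eq_mul,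
    nsmul_eq_mul]
  linear_combination (2 * binomSqSeries) * disc_mul_pderiv_binomSqSeries hij

lemma binomSqSeries_sq_mul_disc : binomSqSeries ^ 2 * disc 0 1 = 1 := by
  refine pderiv.ext (fun i => ?_) (by simp [constantCoeff_binomSqSeries])
  rw [pderiv_one]
  fin_cases i
  · exact pderiv_binomSqSeries_sq_mul_disc zero_ne_one
  · rw [disc_comm]
    exact pderiv_binomSqSeries_sq_mul_disc one_ne_zero

/-- As a formal power series in two variables,
`1/√(1 - 2x - 2y - 2xy + x² + y²) = Σ_{m,n≥0} binom(m+n,m)² xᵐyⁿ`,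
where `√Δ` is the square root of `Δ` with constant term 1 and `Z` is its
multiplicative inverse. -/
theorem stmt_4 (s Z : MvPowerSeries (Fin 2) ℚ)
    (hs : s ^ 2 = 1 - 2 * X 0 - 2 * X 1 - 2 * X 0 * X 1 + (X 0) ^ 2 + (X 1) ^ 2)
    (hs0 : constantCoeff s = 1)
    (hZ : Z * s = 1) :
    ∀ m n : ℕ,
      coeff (Finsupp.single 0 m + Finsupp.single 1 n) Z
        = ((m + n).choose m : ℚ) ^ 2 := by
  intro m n
  have hWs : binomSqSeries * s = 1 := by
    refine eq_one_of_sq_eq_one ?_ (by simp [constantCoeff_binomSqSeries, hs0])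
    rw [mul_pow, hs]
    exact binomSqSeries_sq_mul_disc
  have hZW : Z = binomSqSeries := by
    calc Z = Z * (binomSqSeries * s) := by rw [hWs, mul_one]
      _ = binomSqSeries * (Z * s) := by ring
      _ = binomSqSeries := by rw [hZ, mul_one]
  rw [hZW, coeff_binomSqSeries]
  simp [binomSq]
end

section
/- Suppose α ≠ 1 and f is a polynomial (or suitably analytic function). Then (v s³/((1-s)³(1-v-s))) ⊙_s f(s)|_{s=1} = (x²/SP²)(f(u/x) - f(1)) - (x/SP)·f'(1) - f''(1)/2, where x = u(1-v), SP = uv, and the join is the restricted Hadamard product, using 1/(1-v) = u/x. -/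
/-!
With `c = (1 - v)/v = x/SP` and `α = 1/(1 - v) = u/x`, partial fractions give the coefficients
`gₙ = c²(αⁿ - 1) - c n - n(n - 1)/2` of `v s³/((1-s)³(1-v-s))`; they are found by multiplying
by `(1 - s)⁻³`, which leaves the first-order recurrence `(1 - v) gₙ₊₁ - gₙ = v (n choose 2)`.
Pairing `αⁿ`, `1`, `n`, `n(n - 1)` with the coefficients of `f` yields
`f(α)`, `f(1)`, `f'(1)`, `f''(1)`.
-/

namespace Polynomial

theorem tsum_mul_coeff {R : Type*} [Semiring R] [TopologicalSpace R] (g : ℕ → R) (f : R[X]) :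
    ∑' n, g n * f.coeff n = f.sum fun n a => g n * a :=
  tsum_eq_sum fun n hn => by rw [notMem_support_iff.mp hn, mul_zero]

theorem eval_one_iterate_derivative {R : Type*} [CommSemiring R] (f : R[X]) (k : ℕ) :
    (derivative^[k] f).eval 1 = f.sum fun n a => a * n.descFactorial k := by
  induction f using Polynomial.induction_on' with
  | add p q hp hq =>
    rw [iterate_map_add, eval_add, hp, hq, sum_add_index _ _ _ (fun _ => by simp)
      (fun _ _ _ => by rw [add_mul])]
  | monomial n a =>
    rw [sum_monomial_index _ _ (by simp), ← C_mul_X_pow_eq_monomial, iterate_derivative_C_mul,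
      iterate_derivative_X_pow_eq_C_mul]
    simp

theorem tsum_quadratic_sub_geom_mul_coeff {K : Type*} [Field K] [TopologicalSpace K]
    (f : K[X]) (c α : K) :
    ∑' n : ℕ, (c ^ 2 * (α ^ n - 1) - c * n - n * (n - 1) / 2) * f.coeff n
      = c ^ 2 * (f.eval α - f.eval 1) - c * (derivative f).eval 1
        - (derivative (derivative f)).eval 1 / 2 := by
  have h0 : f.eval 1 = f.sum fun n a => a * n.descFactorial 0 := eval_one_iterate_derivative f 0
  have h1 : (derivative f).eval 1 = f.sum fun n a => a * n.descFactorial 1 :=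
    eval_one_iterate_derivative f 1
  have h2 : (derivative (derivative f)).eval 1 = f.sum fun n a => a * n.descFactorial 2 :=
    eval_one_iterate_derivative f 2
  rw [tsum_mul_coeff, eval_eq_sum, h0, h1, h2]
  simp only [sum_def, Finset.mul_sum, Finset.sum_div, ← Finset.sum_sub_distrib]
  refine Finset.sum_congr rfl fun n _ => ?_
  rw [Nat.cast_descFactorial_two, Nat.descFactorial_one, Nat.descFactorial_zero]
  push_cast
  ring

end Polynomial

namespace PowerSeries

variable {R : Type*} [CommRing R]

theorem coeff_zero_mul_C_sub_X (φ : R⟦X⟧) (a : R) :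
    coeff 0 (φ * (C a - X)) = a * coeff 0 φ := by
  simp [mul_sub, mul_comm]

theorem coeff_succ_mul_C_sub_X (φ : R⟦X⟧) (a : R) (n : ℕ) :
    coeff (n + 1) (φ * (C a - X)) = a * coeff (n + 1) φ - coeff n φ := by
  rw [mul_sub, map_sub, coeff_succ_mul_X, mul_comm, coeff_C_mul]

theorem coeff_succ_X_pow_mul_mk_one_pow (d n : ℕ) :
    coeff (n + 1) (X ^ (d + 1) * mk 1 ^ (d + 1) : R⟦X⟧) = n.choose d := by
  rw [mk_one_pow_eq_mk_choose_add, coeff_X_pow_mul']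
  split_ifs with h
  · rw [coeff_mk]
    congr 2
    omega
  · rw [Nat.choose_eq_zero_of_lt (by omega), Nat.cast_zero]

theorem mul_eq_mul_mk_one_pow_of_mul_one_sub_X_pow_mul_eq {φ ψ χ : R⟦X⟧} {k : ℕ}
    (h : φ * ((1 - X) ^ k * ψ) = χ) : φ * ψ = χ * mk 1 ^ k :=
  calc φ * ψ = φ * ψ * (mk 1 * (1 - X)) ^ k := by rw [mk_one_mul_one_sub_eq_one, one_pow, mul_one]
    _ = φ * ((1 - X) ^ k * ψ) * mk 1 ^ k := by rw [mul_pow]; ring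
    _ = χ * mk 1 ^ k := by rw [h]

theorem coeff_eq_of_mul_one_sub_X_pow_three_mul_C_sub_X_eq
    {K : Type*} [Field K] [CharZero K] {v : K} (hv : v ≠ 0) (hv1 : v ≠ 1) {G : K⟦X⟧}
    (hG : G * ((1 - X) ^ 3 * (C (1 - v) - X)) = C v * X ^ 3) (n : ℕ) :
    coeff n G = ((1 - v) / v) ^ 2 * ((1 - v)⁻¹ ^ n - 1) - (1 - v) / v * n - n * (n - 1) / 2 := by
  have hw : 1 - v ≠ 0 := sub_ne_zero.2 hv1.symm
  have hK := mul_eq_mul_mk_one_pow_of_mul_one_sub_X_pow_mul_eq hG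
  induction n with
  | zero =>
    have h0 : coeff 0 G = 0 := by simpa [coeff_zero_mul_C_sub_X, hw] using congrArg (coeff 0) hK
    simp [h0]
  | succ n ih =>
    have hX : coeff (n + 1) (X ^ 3 * mk 1 ^ 3 : K⟦X⟧) = n.choose 2 :=
      coeff_succ_X_pow_mul_mk_one_pow 2 n
    have h := congrArg (coeff (n + 1)) hK
    rw [coeff_succ_mul_C_sub_X, mul_assoc, coeff_C_mul, hX, Nat.cast_choose_two, ih] at h
    push_cast
    simp only [inv_pow] at h ⊢
    linear_combination (norm := (field_simp; ring)) h / (1 - v)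

end PowerSeries

/-- For a polynomial `f`, the restricted Hadamard join of
`v s³/((1-s)³(1-v-s))` (expanded as a power series `G` in `s`) with `f(s)` at
`s = 1` equals `(x²/SP²)(f(u/x) - f(1)) - (x/SP)f'(1) - f''(1)/2`, where
`x = u(1-v)` and `SP = uv`. -/
theorem stmt_15 (u v : ℝ) (hu : u ≠ 0) (hv : v ≠ 0) (hv1 : v ≠ 1)
    (f : Polynomial ℝ) (G : PowerSeries ℝ)
    (hG : G * ((1 - PowerSeries.X) ^ 3 * (PowerSeries.C (1 - v) - PowerSeries.X))
        = PowerSeries.C v * PowerSeries.X ^ 3) :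
    ∑' n : ℕ, PowerSeries.coeff n G * f.coeff n
      = (u * (1 - v)) ^ 2 / (u * v) ^ 2
            * (f.eval (u / (u * (1 - v))) - f.eval 1)
        - (u * (1 - v)) / (u * v) * (Polynomial.derivative f).eval 1
        - (Polynomial.derivative (Polynomial.derivative f)).eval 1 / 2 := by
  have hα : u / (u * (1 - v)) = (1 - v)⁻¹ := div_mul_cancel_left₀ hu _
  have hc : u * (1 - v) / (u * v) = (1 - v) / v := mul_div_mul_left _ _ hu
  rw [← div_pow, hc, hα]
  simp_rw [PowerSeries.coeff_eq_of_mul_one_sub_X_pow_three_mul_C_sub_X_eq hv hv1 hG]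
  exact Polynomial.tsum_quadratic_sub_geom_mul_coeff f _ _
end

section
/- With x = u(1-v), y = v(1-u), SP = uv, Z = 1/(1-u-v), I = u²/(1-u)², and P'(x,y) = (xy/((1-x)²-y))·(y/(1-x-y))²·(x(1-x)²/((1-x)²-y) + xy/(1-y)), the identity I · P'(u,y) · (SP·Z + v/(1-x)) = (1+u)(1+v)·SP⁴·Z³/((1-x)(1-y)) holds in the field of rational functions in u and v. -/
/-! Everything factors through `(1-u)² - v(1-u) = (1-u)(1-u-v)` and `1-u-v(1-u) = (1-u)(1-v)`.
With these, both sums on the left collapse to single fractions: the bracket of `P'(u,y)` is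
`u(1-u)(1-v)(1+v)·Z/(1-y)` and `SP·Z + v/(1-x)` is `v(1-u)(1+u)(1-v)·Z/(1-x)`.
The factors `(1-u)` and `(1-v)` then cancel against `I` and `(y/(1-x-y))²`. -/

theorem one_sub_sq_sub_mul_one_sub {R : Type*} [CommRing R] (u v : R) :
    (1 - u) ^ 2 - v * (1 - u) = (1 - u) * (1 - u - v) := by
  ring

section

variable {K : Type*} [Field K] {u v : K}

theorem pyramid_bracket_eq (hu : 1 - u ≠ 0) (hZ : 1 - u - v ≠ 0) (hy : 1 - v * (1 - u) ≠ 0) :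
    u * (1 - u) ^ 2 / ((1 - u) ^ 2 - v * (1 - u)) + u * (v * (1 - u)) / (1 - v * (1 - u))
      = u * (1 - u) * (1 - v) * (1 + v) / ((1 - u - v) * (1 - v * (1 - u))) := by
  rw [one_sub_sq_sub_mul_one_sub, div_add_div _ _ (mul_ne_zero hu hZ) hy,
    div_eq_div_iff (mul_ne_zero (mul_ne_zero hu hZ) hy) (mul_ne_zero hZ hy)]
  ring

theorem corner_factor_eq (hZ : 1 - u - v ≠ 0) (hx : 1 - u * (1 - v) ≠ 0) :
    u * v * (1 / (1 - u - v)) + v / (1 - u * (1 - v))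
      = v * (1 - u) * (1 + u) * (1 - v) / ((1 - u - v) * (1 - u * (1 - v))) := by
  field_simp
  ring

end

theorem stmt_19_general {K : Type*} [Field K] (u v : K)
    (h1 : (1 : K) - u ≠ 0)
    (h3 : (1 : K) - u - v * (1 - u) ≠ 0)
    (h4 : (1 : K) - v * (1 - u) ≠ 0)
    (h5 : (1 : K) - u - v ≠ 0)
    (h6 : (1 : K) - u * (1 - v) ≠ 0) :
    (u ^ 2 / (1 - u) ^ 2)
        * ((u * (v * (1 - u)) / ((1 - u) ^ 2 - v * (1 - u)))
            * ((v * (1 - u)) / (1 - u - v * (1 - u))) ^ 2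
            * (u * (1 - u) ^ 2 / ((1 - u) ^ 2 - v * (1 - u))
                + u * (v * (1 - u)) / (1 - v * (1 - u))))
        * ((u * v) * (1 / (1 - u - v)) + v / (1 - u * (1 - v)))
      = (1 + u) * (1 + v) * (u * v) ^ 4 * (1 / (1 - u - v)) ^ 3
          / ((1 - u * (1 - v)) * (1 - v * (1 - u))) := by
  have hxy : (1 : K) - u - v * (1 - u) = (1 - u) * (1 - v) := by ring
  have hv : (1 : K) - v ≠ 0 := right_ne_zero_of_mul (hxy ▸ h3)
  rw [pyramid_bracket_eq h1 h5 h4, corner_factor_eq h5 h6, hxy, one_sub_sq_sub_mul_one_sub]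
  field_simp

/-- With `x = u(1-v)`, `y = v(1-u)`, `SP = uv`, `Z = 1/(1-u-v)`,
`I = u²/(1-u)²`, and
`P'(x,y) = (xy/((1-x)²-y))·(y/(1-x-y))²·(x(1-x)²/((1-x)²-y) + xy/(1-y))`,
the identity `I·P'(u,y)·(SP·Z + v/(1-x)) = (1+u)(1+v)SP⁴Z³/((1-x)(1-y))`
holds (as rational functions of `u,v`, i.e. whenever no denominator
vanishes). -/
theorem stmt_19 {K : Type*} [Field K] (u v : K)
    (h1 : (1 : K) - u ≠ 0)
    (h2 : (1 - u) ^ 2 - v * (1 - u) ≠ 0)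
    (h3 : (1 : K) - u - v * (1 - u) ≠ 0)
    (h4 : (1 : K) - v * (1 - u) ≠ 0)
    (h5 : (1 : K) - u - v ≠ 0)
    (h6 : (1 : K) - u * (1 - v) ≠ 0) :
    (u ^ 2 / (1 - u) ^ 2)
        * ((u * (v * (1 - u)) / ((1 - u) ^ 2 - v * (1 - u)))
            * ((v * (1 - u)) / (1 - u - v * (1 - u))) ^ 2
            * (u * (1 - u) ^ 2 / ((1 - u) ^ 2 - v * (1 - u))
                + u * (v * (1 - u)) / (1 - v * (1 - u))))
        * ((u * v) * (1 / (1 - u - v)) + v / (1 - u * (1 - v)))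
      = (1 + u) * (1 + v) * (u * v) ^ 4 * (1 / (1 - u - v)) ^ 3
          / ((1 - u * (1 - v)) * (1 - v * (1 - u))) :=
  stmt_19_general u v h1 h3 h4 h5 h6
end
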